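/- Every symmetric matrix A over GF(2) admits an LDL decomposition: there exist a permutation matrix P, a unit lower-triangular matrix L, and a block-diagonal matrix D whose diagonal blocks are 0, 1, or the 2x2 antidiagonal matrix [[0,1],[1,0]], all over GF(2), such that A = P L D Lᵀ Pᵀ. -/

import Mathlib

/-!
Symmetric Gaussian elimination with 1×1 and 2×2 pivots. A nonzero symmetric matrix over GF(2)
has either a diagonal entry `1`, or zero diagonal and an entry `A i j = 1`; in the second case the
principal submatrix on `{i, j}` is `[[0,1],[1,0]]`, which is its own inverse. Moving the pivot
block `E` to the top left, `[[E, Wᵀ], [W, C]] = L₀ · diag(E, S) · L₀ᵀ` with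
`L₀ = [[1, 0], [W E⁻¹, 1]]` and the Schur complement `S = C - W E⁻¹ Wᵀ`, which is again
symmetric and strictly smaller, so induction on the size finishes.
-/

open Matrix Equiv

theorem Function.Injective.exists_sum_fin_equiv {α β : Type*} [Fintype α] {f : β → α}
    (hf : Function.Injective f) :
    ∃ (m : ℕ) (e : β ⊕ Fin m ≃ α), ∀ i, e (Sum.inl i) = f i := by
  classical
  exact ⟨_, (sumCongr (ofInjective f hf) (Fintype.equivFin _).symm).trans
    (sumCompl (· ∈ Set.range f)), fun i => rfl⟩

theorem ZMod.eq_one_of_ne_zero_mod_two {x : ZMod 2} (hx : x ≠ 0) : x = 1 := by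
  revert x; decide

namespace Matrix

theorem permMatrix_mul_mul_transpose_permMatrix {ι R : Type*} [Fintype ι] [DecidableEq ι]
    [NonAssocSemiring R] (σ : Perm ι) (M : Matrix ι ι R) :
    σ.permMatrix R * M * (σ.permMatrix R)ᵀ = M.submatrix σ σ := by
  rw [transpose_permMatrix, PEquiv.toMatrix_toPEquiv_mul, PEquiv.mul_toMatrix_toPEquiv]
  rfl

theorem IsSymm.eq_fromBlocks_toBlocks {ι κ α : Type*} {B : Matrix (ι ⊕ κ) (ι ⊕ κ) α}
    (hB : B.IsSymm) :
    B = Matrix.fromBlocks B.toBlocks₁₁ B.toBlocks₂₁ᵀ B.toBlocks₂₁ B.toBlocks₂₂ := by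
  ext (i | i) (j | j) <;> simp [toBlocks₁₁, toBlocks₂₁, toBlocks₂₂, hB.apply]

section SchurComplement

variable {R ι κ : Type*} [Fintype ι] [DecidableEq ι] [CommRing R]

theorem IsSymm.sub_mul_nonsing_inv_mul_transpose {C : Matrix κ κ R} (hC : C.IsSymm)
    {E : Matrix ι ι R} (hE : E.IsSymm) (W : Matrix κ ι R) : (C - W * E⁻¹ * Wᵀ).IsSymm :=
  hC.sub <| by simp [IsSymm, transpose_mul, hE.inv.eq, Matrix.mul_assoc]

theorem fromBlocks_eq_mul_fromBlocks_mul_transpose [Fintype κ] [DecidableEq κ]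
    {E : Matrix ι ι R} (hE : E.IsSymm) (hdet : IsUnit E.det) (W : Matrix κ ι R)
    {C L D : Matrix κ κ R} (hC : C - W * E⁻¹ * Wᵀ = L * D * Lᵀ) :
    fromBlocks E Wᵀ W C =
      fromBlocks 1 0 (W * E⁻¹) L * fromBlocks E 0 0 D * (fromBlocks 1 0 (W * E⁻¹) L)ᵀ := by
  let := E.invertibleOfIsUnitDet hdet
  rw [fromBlocks_eq_of_invertible₁₁, invOf_eq_nonsing_inv, hC]
  simp only [fromBlocks_transpose, fromBlocks_multiply, transpose_mul, hE.inv.eq, transpose_one,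
    transpose_zero, Matrix.mul_zero, Matrix.zero_mul, add_zero, zero_add, Matrix.one_mul,
    Matrix.mul_one, Matrix.mul_assoc]

end SchurComplement

variable {R : Type*} {n k m : ℕ}

def IsUnitLowerTriangular [Zero R] [One R] (L : Matrix (Fin n) (Fin n) R) : Prop :=
  (∀ i, L i i = 1) ∧ ∀ i j, i < j → L i j = 0

/-- Block diagonal with diagonal blocks `(0)`, `(1)` or `[[0,1],[1,0]]`. -/
structure IsLDLBlockDiagonal [Zero R] [One R] (D : Matrix (Fin n) (Fin n) R) : Prop where
  adjacent : ∀ i j : Fin n, i ≠ j → D i j ≠ 0 → ((i : ℕ) + 1 = j ∨ (j : ℕ) + 1 = i)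
  symm : ∀ i j : Fin n, D i j = D j i
  antidiagonal : ∀ i j : Fin n, (i : ℕ) + 1 = j → D i j = 1 → D i i = 0 ∧ D j j = 0
  disjoint : ∀ i j l : Fin n, (i : ℕ) + 1 = j → (j : ℕ) + 1 = l → D i j = 1 → D j l = 0

theorem isUnitLowerTriangular_one [Zero R] [One R] :
    (1 : Matrix (Fin n) (Fin n) R).IsUnitLowerTriangular :=
  ⟨fun _ => one_apply_eq _, fun _ _ hij => one_apply_ne hij.ne⟩

theorem IsUnitLowerTriangular.reindex_fromBlocks [Zero R] [One R]
    {L₁ : Matrix (Fin k) (Fin k) R} {L₂ : Matrix (Fin m) (Fin m) R}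
    (h₁ : L₁.IsUnitLowerTriangular) (h₂ : L₂.IsUnitLowerTriangular)
    (C : Matrix (Fin m) (Fin k) R) :
    (reindex finSumFinEquiv finSumFinEquiv (fromBlocks L₁ 0 C L₂)).IsUnitLowerTriangular := by
  constructor
  · intro i
    induction i using Fin.addCases <;> simp [h₁.1, h₂.1]
  · intro i j hij
    induction i using Fin.addCases <;> induction j using Fin.addCases <;> simp
    · exact h₁.2 _ _ hij
    · exact absurd hij (by rw [Fin.lt_def]; simp; omega)
    · exact h₂.2 _ _ ((Fin.natAdd_lt_natAdd_iff k).1 hij)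

theorem isLDLBlockDiagonal_zero [Zero R] [One R] :
    (0 : Matrix (Fin n) (Fin n) R).IsLDLBlockDiagonal where
  adjacent _ _ _ h := absurd rfl h
  symm _ _ := rfl
  antidiagonal _ _ _ _ := ⟨rfl, rfl⟩
  disjoint _ _ _ _ _ _ := rfl

theorem isLDLBlockDiagonal_of_fin_one [Zero R] [One R] (E : Matrix (Fin 1) (Fin 1) R) :
    E.IsLDLBlockDiagonal where
  adjacent i j h := absurd (Subsingleton.elim i j) h
  symm i j := by rw [Subsingleton.elim i j]
  antidiagonal i j h := by omega
  disjoint i j _ h := by omega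

theorem isLDLBlockDiagonal_antidiagonal [Zero R] [One R] :
    (!![0, 1; 1, 0] : Matrix (Fin 2) (Fin 2) R).IsLDLBlockDiagonal where
  adjacent := by simp [Fin.forall_fin_two]
  symm := by simp [Fin.forall_fin_two]
  antidiagonal := by simp [Fin.forall_fin_two]
  disjoint i j l := by omega

theorem IsLDLBlockDiagonal.reindex_fromBlocks [Zero R] [One R] [NeZero (1 : R)]
    {D₁ : Matrix (Fin k) (Fin k) R} {D₂ : Matrix (Fin m) (Fin m) R}
    (h₁ : D₁.IsLDLBlockDiagonal) (h₂ : D₂.IsLDLBlockDiagonal) :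
    (reindex finSumFinEquiv finSumFinEquiv (fromBlocks D₁ 0 0 D₂)).IsLDLBlockDiagonal := by
  constructor
  · intro i j
    induction i using Fin.addCases <;> induction j using Fin.addCases <;> simp [add_assoc]
    exacts [h₁.adjacent _ _, h₂.adjacent _ _]
  · intro i j
    induction i using Fin.addCases <;> induction j using Fin.addCases <;> simp
    exacts [h₁.symm _ _, h₂.symm _ _]
  · intro i j
    induction i using Fin.addCases <;> induction j using Fin.addCases <;> simp [add_assoc]
    exacts [h₁.antidiagonal _ _, h₂.antidiagonal _ _]
  · intro i j l
    induction i using Fin.addCases <;> induction j using Fin.addCases <;>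
      induction l using Fin.addCases <;> simp [add_assoc]
    exacts [h₁.disjoint _ _ _, h₂.disjoint _ _ _]

def HasPermutedLDL [Semiring R] (A : Matrix (Fin n) (Fin n) R) : Prop :=
  ∃ (σ : Perm (Fin n)) (L D : Matrix (Fin n) (Fin n) R),
    L.IsUnitLowerTriangular ∧ D.IsLDLBlockDiagonal ∧ A = (L * D * Lᵀ).submatrix σ σ

theorem hasPermutedLDL_zero [Semiring R] : (0 : Matrix (Fin n) (Fin n) R).HasPermutedLDL :=
  ⟨1, 1, 0, isUnitLowerTriangular_one, isLDLBlockDiagonal_zero, by simp⟩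

theorem hasPermutedLDL_of_schur_eq [CommRing R] [Nontrivial R] {A : Matrix (Fin n) (Fin n) R}
    (e : Fin k ⊕ Fin m ≃ Fin n) {E : Matrix (Fin k) (Fin k) R} (hEs : E.IsSymm)
    (hdet : IsUnit E.det) (hE : E.IsLDLBlockDiagonal) {W : Matrix (Fin m) (Fin k) R}
    {C L D : Matrix (Fin m) (Fin m) R} (hA : A.submatrix e e = fromBlocks E Wᵀ W C)
    (hL : L.IsUnitLowerTriangular) (hD : D.IsLDLBlockDiagonal)
    (hC : C - W * E⁻¹ * Wᵀ = L * D * Lᵀ) : A.HasPermutedLDL := by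
  obtain rfl : k + m = n := by simpa using Fintype.card_congr e
  set f : Fin k ⊕ Fin m ≃ Fin (k + m) := finSumFinEquiv
  refine ⟨e.symm.trans f, reindex f f (fromBlocks 1 0 (W * E⁻¹) L),
    reindex f f (fromBlocks E 0 0 D), isUnitLowerTriangular_one.reindex_fromBlocks hL _,
    hE.reindex_fromBlocks hD, ?_⟩
  calc A = (A.submatrix e e).submatrix e.symm e.symm := by simp [submatrix_submatrix]
    _ = _ := by
      rw [hA, fromBlocks_eq_mul_fromBlocks_mul_transpose hEs hdet W hC]
      simp [reindex_apply, transpose_submatrix, submatrix_mul_equiv, submatrix_submatrix,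
        Function.comp_def]

theorem HasPermutedLDL.of_pivot [CommRing R] [Nontrivial R] {A : Matrix (Fin n) (Fin n) R}
    (e : Fin k ⊕ Fin m ≃ Fin n) {E : Matrix (Fin k) (Fin k) R} (hEs : E.IsSymm)
    (hdet : IsUnit E.det) (hE : E.IsLDLBlockDiagonal) {W : Matrix (Fin m) (Fin k) R}
    {C : Matrix (Fin m) (Fin m) R} (hA : A.submatrix e e = fromBlocks E Wᵀ W C)
    (hS : (C - W * E⁻¹ * Wᵀ).HasPermutedLDL) : A.HasPermutedLDL := by
  obtain ⟨τ, L, D, hL, hD, hτ⟩ := hS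
  refine hasPermutedLDL_of_schur_eq ((sumCongr (.refl _) τ.symm).trans e) hEs hdet hE
    (W := W.submatrix τ.symm id) (C := C.submatrix τ.symm τ.symm) ?_ hL hD ?_
  · rw [coe_trans, ← submatrix_submatrix, hA]
    ext (i | i) (j | j) <;> simp
  · calc _ = (C - W * E⁻¹ * Wᵀ).submatrix τ.symm τ.symm := by
          ext i j
          simp [mul_apply]
      _ = L * D * Lᵀ := by simp [hτ, submatrix_submatrix]

theorem exists_pivot_of_isSymm {A : Matrix (Fin n) (Fin n) (ZMod 2)} (hA : A.IsSymm)
    (h0 : A ≠ 0) :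
    ∃ (k m : ℕ) (e : Fin k ⊕ Fin m ≃ Fin n) (E : Matrix (Fin k) (Fin k) (ZMod 2)),
      0 < k ∧ IsUnit E.det ∧ E.IsLDLBlockDiagonal ∧ (A.submatrix e e).toBlocks₁₁ = E := by
  by_cases hdiag : ∃ i, A i i ≠ 0
  · obtain ⟨i, hi⟩ := hdiag
    obtain ⟨m, e, he⟩ :=
      (Function.injective_of_subsingleton (fun _ : Fin 1 => i)).exists_sum_fin_equiv
    refine ⟨1, m, e, 1, one_pos, by simp, isLDLBlockDiagonal_of_fin_one 1, ?_⟩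
    ext a b
    fin_cases a; fin_cases b
    simp [toBlocks₁₁, he, ZMod.eq_one_of_ne_zero_mod_two hi]
  · push Not at hdiag
    obtain ⟨i, j, hij⟩ : ∃ i j, A i j ≠ 0 := by
      by_contra! h
      exact h0 (Matrix.ext h)
    have hne : i ≠ j := by rintro rfl; exact hij (hdiag i)
    obtain ⟨m, e, he⟩ := (show Function.Injective ![i, j] by
      simp [Function.Injective, Fin.forall_fin_two, hne, hne.symm]).exists_sum_fin_equiv
    refine ⟨2, m, e, !![0, 1; 1, 0], two_pos, by simp [det_fin_two],
      isLDLBlockDiagonal_antidiagonal, ?_⟩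
    ext a b
    fin_cases a <;> fin_cases b <;>
      simp [toBlocks₁₁, he, hdiag, ZMod.eq_one_of_ne_zero_mod_two hij, hA.apply i j]

theorem IsSymm.hasPermutedLDL {A : Matrix (Fin n) (Fin n) (ZMod 2)} (hA : A.IsSymm) :
    A.HasPermutedLDL := by
  induction n using Nat.strong_induction_on with
  | _ n ih =>
  by_cases h0 : A = 0
  · exact h0 ▸ hasPermutedLDL_zero
  obtain ⟨k, m, e, E, hk, hdet, hE, hAE⟩ := exists_pivot_of_isSymm hA h0
  have hm : m < n := by
    have := Fintype.card_congr e
    simp only [Fintype.card_sum, Fintype.card_fin] at this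
    omega
  have hB := (hA.submatrix e).eq_fromBlocks_toBlocks
  have hEs : E.IsSymm := hAE ▸ (hA.submatrix (e ∘ Sum.inl))
  have hCs : (A.submatrix e e).toBlocks₂₂.IsSymm := hA.submatrix (e ∘ Sum.inr)
  rw [hAE] at hB
  exact HasPermutedLDL.of_pivot e hEs hdet hE hB
    (ih m hm (hCs.sub_mul_nonsing_inv_mul_transpose hEs _))

end Matrix

/-- Every symmetric matrix over GF(2) admits an LDL decomposition with a permutation
matrix `P`, a unit lower-triangular `L`, and a block-diagonal `D` whose diagonal blocks
are `0`, `1`, or the 2×2 antidiagonal matrix. -/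
theorem gf2_ldl_exists (n : ℕ) (A : Matrix (Fin n) (Fin n) (ZMod 2)) (hA : A.IsSymm) :
    ∃ (σ : Equiv.Perm (Fin n)) (L D : Matrix (Fin n) (Fin n) (ZMod 2)),
      -- L is unit lower-triangular
      (∀ i, L i i = 1) ∧ (∀ i j, i < j → L i j = 0) ∧
      -- D is block-diagonal with 1×1 or 2×2 antidiagonal blocks:
      -- nonzero entries lie on the diagonal or on adjacent off-diagonal positions
      (∀ i j : Fin n, i ≠ j → D i j ≠ 0 → ((i : ℕ) + 1 = j ∨ (j : ℕ) + 1 = i)) ∧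
      (∀ i j : Fin n, D i j = D j i) ∧
      -- a 2×2 block is the antidiagonal matrix [[0,1],[1,0]]
      (∀ i j : Fin n, (i : ℕ) + 1 = j → D i j = 1 → D i i = 0 ∧ D j j = 0) ∧
      -- 2×2 blocks do not overlap
      (∀ i j l : Fin n, (i : ℕ) + 1 = j → (j : ℕ) + 1 = l → D i j = 1 → D j l = 0) ∧
      A = (σ.permMatrix (ZMod 2)) * L * D * Lᵀ * (σ.permMatrix (ZMod 2))ᵀ := by
  obtain ⟨σ, L, D, ⟨hdiag, hupper⟩, hD, hA⟩ := hA.hasPermutedLDL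
  refine ⟨σ, L, D, hdiag, hupper, hD.adjacent, hD.symm, hD.antidiagonal, hD.disjoint, ?_⟩
  rw [hA, ← permMatrix_mul_mul_transpose_permMatrix]
  simp only [Matrix.mul_assoc]
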